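/- Let m, n, r be positive integers and let η, E, G, Γ_u, Γ_v ≥ 0 be reals. Let U₀ be a real m×r matrix with ‖U₀‖_F ≤ Γ_u and V₀ a real n×r matrix with ‖V₀‖_F ≤ Γ_v. Let P and P′ be real m×r matrices with ‖P‖_F ≤ E·G·Γ_v and ‖P′‖_F ≤ E·G·Γ_v, and let Q and Q′ be real n×r matrices with ‖Q‖_F ≤ E·G·Γ_u and ‖Q′‖_F ≤ E·G·Γ_u. Then ‖(U₀ − η·P′)·(V₀ − η·Q′)ᵀ − (U₀ − η·P)·(V₀ − η·Q)ᵀ‖_F² ≤ 12·η²·E²·G²·(Γ_u⁴ + Γ_v⁴ + η²·E²·G²·Γ_u²·Γ_v²). -/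

import Mathlib

/-!
Both products are perturbations of `U₀ V₀ᵀ`; their difference is
`η (U₀ (Q - Q')ᵀ + (P - P') V₀ᵀ) + η² (P' Q'ᵀ - P Qᵀ)`. Submultiplicativity of the Frobenius
norm and the triangle inequality bound its norm by `2 |η| E G (Γu² + Γv² + |η| E G Γu Γv)`,
and `(a + b + c)² ≤ 3 (a² + b² + c²)` turns the square of this into the claimed bound.
-/

open Matrix BigOperators

/-- Squared Frobenius norm of a real matrix. -/
noncomputable def frobSq {m n : ℕ} (A : Matrix (Fin m) (Fin n) ℝ) : ℝ :=
  ∑ i, ∑ j, (A i j) ^ 2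

/-- Frobenius norm of a real matrix. -/
noncomputable def frobNorm {m n : ℕ} (A : Matrix (Fin m) (Fin n) ℝ) : ℝ :=
  Real.sqrt (frobSq A)

attribute [local instance] Matrix.frobeniusSeminormedAddCommGroup Matrix.frobeniusNormSMulClass

lemma frobNorm_eq_norm {m n : ℕ} (A : Matrix (Fin m) (Fin n) ℝ) : frobNorm A = ‖A‖ := by
  rw [frobNorm, frobSq, frobenius_norm_def, Real.sqrt_eq_rpow]
  congr 1
  refine Finset.sum_congr rfl fun i _ => Finset.sum_congr rfl fun j _ => ?_
  rw [Real.rpow_two, Real.norm_eq_abs, sq_abs]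

lemma frobSq_eq_norm_sq {m n : ℕ} (A : Matrix (Fin m) (Fin n) ℝ) : frobSq A = ‖A‖ ^ 2 := by
  have h : 0 ≤ frobSq A := Finset.sum_nonneg fun i _ => Finset.sum_nonneg fun j _ => sq_nonneg _
  rw [← Real.sq_sqrt h, ← frobNorm, frobNorm_eq_norm]

lemma sub_smul_mul_transpose_sub_smul_sub {l m n α : Type*} [Fintype n] [CommRing α] (η : α)
    (U P P' : Matrix l n α) (V Q Q' : Matrix m n α) :
    (U - η • P') * (V - η • Q')ᵀ - (U - η • P) * (V - η • Q)ᵀ =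
      η • (U * (Q - Q')ᵀ + (P - P') * Vᵀ) + (η * η) • (P' * Q'ᵀ - P * Qᵀ) := by
  simp only [transpose_sub, transpose_smul, Matrix.sub_mul, Matrix.mul_sub, Matrix.smul_mul,
    Matrix.mul_smul, smul_smul, smul_add, smul_sub]
  abel

section Perturbation

variable {l m n : Type*} [Fintype l] [Fintype m] [Fintype n]

lemma frobenius_norm_mul_transpose_le {A : Matrix l n ℝ} {B : Matrix m n ℝ} {a b : ℝ}
    (hA : ‖A‖ ≤ a) (hB : ‖B‖ ≤ b) : ‖A * Bᵀ‖ ≤ a * b :=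
  (frobenius_norm_mul A Bᵀ).trans <| by
    rw [frobenius_norm_transpose]
    exact mul_le_mul hA hB (norm_nonneg B) ((norm_nonneg A).trans hA)

lemma frobenius_norm_perturbed_product_sub_le (η : ℝ) {a b p q : ℝ}
    {U P P' : Matrix l n ℝ} {V Q Q' : Matrix m n ℝ}
    (hU : ‖U‖ ≤ a) (hV : ‖V‖ ≤ b) (hP : ‖P‖ ≤ p) (hP' : ‖P'‖ ≤ p)
    (hQ : ‖Q‖ ≤ q) (hQ' : ‖Q'‖ ≤ q) :
    ‖(U - η • P') * (V - η • Q')ᵀ - (U - η • P) * (V - η • Q)ᵀ‖ ≤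
      |η| * (a * (q + q) + (p + p) * b) + η ^ 2 * (p * q + p * q) := by
  have hQQ' : ‖Q - Q'‖ ≤ q + q := (norm_sub_le Q Q').trans (add_le_add hQ hQ')
  have hPP' : ‖P - P'‖ ≤ p + p := (norm_sub_le P P').trans (add_le_add hP hP')
  have hfirst : ‖U * (Q - Q')ᵀ + (P - P') * Vᵀ‖ ≤ a * (q + q) + (p + p) * b :=
    (norm_add_le _ _).trans <| add_le_add (frobenius_norm_mul_transpose_le hU hQQ')
      (frobenius_norm_mul_transpose_le hPP' hV)
  have hsecond : ‖P' * Q'ᵀ - P * Qᵀ‖ ≤ p * q + p * q :=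
    (norm_sub_le _ _).trans <| add_le_add (frobenius_norm_mul_transpose_le hP' hQ')
      (frobenius_norm_mul_transpose_le hP hQ)
  rw [sub_smul_mul_transpose_sub_smul_sub]
  calc _ ≤ ‖η • (U * (Q - Q')ᵀ + (P - P') * Vᵀ)‖ + ‖(η * η) • (P' * Q'ᵀ - P * Qᵀ)‖ :=
        norm_add_le _ _
    _ = |η| * ‖U * (Q - Q')ᵀ + (P - P') * Vᵀ‖ + η ^ 2 * ‖P' * Q'ᵀ - P * Qᵀ‖ := by
        rw [norm_smul, norm_smul, Real.norm_eq_abs, Real.norm_of_nonneg (mul_self_nonneg η), sq]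
    _ ≤ _ := by gcongr

end Perturbation

lemma add_add_sq_le_three_mul (a b c : ℝ) : (a + b + c) ^ 2 ≤ 3 * (a ^ 2 + b ^ 2 + c ^ 2) := by
  nlinarith [sq_nonneg (a - b), sq_nonneg (b - c), sq_nonneg (a - c)]

theorem recovered_product_deviation_bound_general {m n r : ℕ}
    (η E G Γu Γv : ℝ)
    (U₀ : Matrix (Fin m) (Fin r) ℝ) (hU₀ : frobNorm U₀ ≤ Γu)
    (V₀ : Matrix (Fin n) (Fin r) ℝ) (hV₀ : frobNorm V₀ ≤ Γv)
    (P P' : Matrix (Fin m) (Fin r) ℝ)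
    (hP : frobNorm P ≤ E * G * Γv) (hP' : frobNorm P' ≤ E * G * Γv)
    (Q Q' : Matrix (Fin n) (Fin r) ℝ)
    (hQ : frobNorm Q ≤ E * G * Γu) (hQ' : frobNorm Q' ≤ E * G * Γu) :
    frobSq ((U₀ - η • P') * (V₀ - η • Q')ᵀ - (U₀ - η • P) * (V₀ - η • Q)ᵀ) ≤
      12 * η ^ 2 * E ^ 2 * G ^ 2 *
        (Γu ^ 4 + Γv ^ 4 + η ^ 2 * E ^ 2 * G ^ 2 * Γu ^ 2 * Γv ^ 2) := by
  rw [frobNorm_eq_norm] at hU₀ hV₀ hP hP' hQ hQ'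
  have hnorm := frobenius_norm_perturbed_product_sub_le η hU₀ hV₀ hP hP' hQ hQ'
  rw [frobSq_eq_norm_sq]
  calc _ ≤ (|η| * (Γu * (E * G * Γu + E * G * Γu) + (E * G * Γv + E * G * Γv) * Γv)
          + η ^ 2 * (E * G * Γv * (E * G * Γu) + E * G * Γv * (E * G * Γu))) ^ 2 :=
        pow_le_pow_left₀ (norm_nonneg _) hnorm 2
    _ = 4 * η ^ 2 * E ^ 2 * G ^ 2 * (Γu ^ 2 + Γv ^ 2 + |η| * E * G * Γu * Γv) ^ 2 := by
        rw [← sq_abs η]; ring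
    _ ≤ 4 * η ^ 2 * E ^ 2 * G ^ 2 *
          (3 * ((Γu ^ 2) ^ 2 + (Γv ^ 2) ^ 2 + (|η| * E * G * Γu * Γv) ^ 2)) := by
        gcongr; exact add_add_sq_le_three_mul _ _ _
    _ = _ := by rw [mul_pow, mul_pow, mul_pow, mul_pow, sq_abs]; ring

/-- Deterministic matrix core of Lemma 4: two candidates obtained from common initial
factors (U₀, V₀) by subtracting η times accumulated gradient terms of bounded
Frobenius norm yield recovered products differing by at most
12η²E²G²(Γ_u⁴ + Γ_v⁴ + η²E²G²Γ_u²Γ_v²) in squared Frobenius norm. -/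
theorem recovered_product_deviation_bound {m n r : ℕ}
    (hm : 0 < m) (hn : 0 < n) (hr : 0 < r)
    (η E G Γu Γv : ℝ) (hη : 0 ≤ η) (hE : 0 ≤ E) (hG : 0 ≤ G)
    (hΓu : 0 ≤ Γu) (hΓv : 0 ≤ Γv)
    (U₀ : Matrix (Fin m) (Fin r) ℝ) (hU₀ : frobNorm U₀ ≤ Γu)
    (V₀ : Matrix (Fin n) (Fin r) ℝ) (hV₀ : frobNorm V₀ ≤ Γv)
    (P P' : Matrix (Fin m) (Fin r) ℝ)
    (hP : frobNorm P ≤ E * G * Γv) (hP' : frobNorm P' ≤ E * G * Γv)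
    (Q Q' : Matrix (Fin n) (Fin r) ℝ)
    (hQ : frobNorm Q ≤ E * G * Γu) (hQ' : frobNorm Q' ≤ E * G * Γu) :
    frobSq ((U₀ - η • P') * (V₀ - η • Q')ᵀ - (U₀ - η • P) * (V₀ - η • Q)ᵀ) ≤
      12 * η ^ 2 * E ^ 2 * G ^ 2 *
        (Γu ^ 4 + Γv ^ 4 + η ^ 2 * E ^ 2 * G ^ 2 * Γu ^ 2 * Γv ^ 2) :=
  recovered_product_deviation_bound_general η E G Γu Γv U₀ hU₀ V₀ hV₀ P P' hP hP' Q Q' hQ hQ'
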